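/- Let X ~ Poisson(λ), δ ≥ 1/√λ, and suppose λδ³ = o(1) as λ → ∞. Then (1 − o(1)) c · e^{−λδ²/2}/(δ√λ) ≤ P(X ≥ λ(1+δ)) ≤ (1 + o(1)) · e^{−λδ²/2}/(δ√λ), where c is the universal constant from the sharp Poisson tail lower bound. -/

import Mathlib

/-!
By Stirling's formula, `P(X = n) = e^{-μ h(n/μ - 1)} / Θ(√n)` for `n ≥ 1`, where
`h(t) = (1 + t) log(1 + t) - t = t²/2 + O(t³)`. Above the mean the point masses are decreasing and
decay at least geometrically with ratio `μ/(n + 1)`. At level `λ(1+δ)` this ratio is at most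
`1/(1+δ)`, so the tail is at most `(1+δ)/δ` times its first point mass; and it is at least
`⌈1/δ⌉` times the mass `⌈1/δ⌉` steps further on, where the exponent is still `λδ²/2 + O(1)`
because `δ ≥ λ^{-1/2}`. Once `λδ³ ≤ 1/100` both estimates hold with explicit constants, the upper
one with `e^{8/25}(1+δ)/√(2π) < 1`, so the `o(1)` terms can be taken to be `0`.
-/

open Filter

/-- The probability that a Poisson(μ) random variable equals `k`. -/
noncomputable def poissonProb (μ : ℝ) (k : ℕ) : ℝ :=
  Real.exp (-μ) * μ ^ k / (Nat.factorial k : ℝ)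

/-- The upper tail `P(X ≥ x)` of a Poisson(μ) random variable. -/
noncomputable def poissonTail (μ : ℝ) (x : ℝ) : ℝ :=
  ∑' k : ℕ, if x ≤ (k : ℝ) then poissonProb μ k else 0

open Real
open scoped Nat

lemma factorial_le_exp_one_mul_sqrt_mul_pow {n : ℕ} (hn : n ≠ 0) :
    (n ! : ℝ) ≤ exp 1 * √n * (n / exp 1) ^ n := by
  have hseq : Stirling.stirlingSeq n ≤ exp 1 / √2 := by
    obtain ⟨k, rfl⟩ := Nat.exists_eq_add_of_le (Nat.one_le_iff_ne_zero.mpr hn)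
    rw [← Stirling.stirlingSeq_one]
    simpa [Function.comp, Nat.add_comm] using Stirling.stirlingSeq'_antitone (Nat.zero_le k)
  rw [Stirling.stirlingSeq, div_le_iff₀ (by positivity)] at hseq
  calc (n ! : ℝ) ≤ exp 1 / √2 * (√(2 * n) * (n / exp 1) ^ n) := hseq
    _ = exp 1 * √n * (n / exp 1) ^ n := by
      rw [sqrt_mul zero_le_two]; field_simp

noncomputable def poissonRate (t : ℝ) : ℝ :=
  (1 + t) * log (1 + t) - t

lemma abs_log_one_add_sub_le {x : ℝ} (hx0 : 0 ≤ x) (hx : x ≤ 1 / 2) :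
    |log (1 + x) - (x - x ^ 2 / 2)| ≤ 2 * x ^ 3 := by
  have h := abs_log_sub_add_sum_range_le (x := -x) (by rw [abs_neg, abs_of_nonneg hx0]; linarith) 2
  rw [abs_neg, abs_of_nonneg hx0, sub_neg_eq_add] at h
  simp only [Finset.sum_range_succ, Finset.sum_range_zero] at h
  norm_num at h
  calc |log (1 + x) - (x - x ^ 2 / 2)| = |-x + x ^ 2 / 2 + log (1 + x)| := by ring_nf
    _ ≤ x ^ 3 / (1 - x) := h
    _ ≤ 2 * x ^ 3 := by rw [div_le_iff₀ (by linarith)]; nlinarith [pow_nonneg hx0 3]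

lemma abs_poissonRate_sub_sq_div_two_le {t : ℝ} (ht0 : 0 ≤ t) (ht : t ≤ 1 / 2) :
    |poissonRate t - t ^ 2 / 2| ≤ 4 * t ^ 3 := by
  have hlog := abs_log_one_add_sub_le ht0 ht
  calc |poissonRate t - t ^ 2 / 2|
      = |(1 + t) * (log (1 + t) - (t - t ^ 2 / 2)) - t ^ 3 / 2| := by
        unfold poissonRate; ring_nf
    _ ≤ (1 + t) * (2 * t ^ 3) + t ^ 3 / 2 := by
        refine (abs_sub _ _).trans (add_le_add ?_ (abs_of_nonneg (by positivity)).le)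
        rw [abs_mul, abs_of_nonneg (by linarith)]
        gcongr
    _ ≤ 4 * t ^ 3 := by nlinarith [pow_nonneg ht0 3]

lemma sub_le_mul_poissonRate {l d t : ℝ} (hl : 0 ≤ l) (hd : 0 ≤ d) (htd : d ≤ t)
    (ht2d : t ≤ 2 * d) (ht : t ≤ 1 / 2) :
    l * d ^ 2 / 2 - 32 * (l * d ^ 3) ≤ l * poissonRate t := by
  have h := (abs_le.mp (abs_poissonRate_sub_sq_div_two_le (hd.trans htd) ht)).1
  have h2 : l * d ^ 2 ≤ l * t ^ 2 := by gcongr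
  have h3 : l * t ^ 3 ≤ l * (2 * d) ^ 3 := by gcongr; linarith
  nlinarith

lemma mul_poissonRate_le_add {l d t : ℝ} (hl : 0 ≤ l) (hd : 0 < d) (hld2 : 1 ≤ l * d ^ 2)
    (htd : d ≤ t) (hlt : l * d * (t - d) ≤ 3) (ht : t ≤ 1 / 2) :
    l * poissonRate t ≤ l * d ^ 2 / 2 + 15 / 2 + 256 * (l * d ^ 3) := by
  have h := (abs_le.mp (abs_poissonRate_sub_sq_div_two_le (hd.le.trans htd) ht)).2
  have ht4d : t ≤ 4 * d := by nlinarith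
  have h2 : l * t ^ 2 ≤ l * d ^ 2 + 15 := by nlinarith
  have h3 : l * t ^ 3 ≤ l * (4 * d) ^ 3 := by gcongr; linarith
  nlinarith

lemma poissonProb_eq_exp_mul {μ : ℝ} (hμ : 0 < μ) {n : ℕ} (hn : n ≠ 0) :
    poissonProb μ n = exp (-(μ * poissonRate (n / μ - 1))) * ((n / exp 1) ^ n / n !) := by
  have hn' : (0 : ℝ) < n := by positivity
  have hexp : exp (-(μ * poissonRate (n / μ - 1))) = exp (-μ) * exp n * (μ / n) ^ n := by
    rw [← exp_log (by positivity : 0 < μ / n), ← exp_nat_mul, ← exp_add, ← exp_add, poissonRate,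
      log_div hμ.ne' hn'.ne', add_sub_cancel, log_div hn'.ne' hμ.ne']
    congr 1
    field_simp
    ring
  rw [hexp, poissonProb, div_pow, div_pow, ← exp_nat_mul, mul_one]
  field_simp

lemma poissonProb_le_exp_div {μ : ℝ} (hμ : 0 < μ) {n : ℕ} (hn : n ≠ 0) :
    poissonProb μ n ≤ exp (-(μ * poissonRate (n / μ - 1))) / √(2 * π * n) := by
  rw [poissonProb_eq_exp_mul hμ hn, div_eq_mul_one_div _ (√_)]
  refine mul_le_mul_of_nonneg_left ?_ (exp_pos _).le
  rw [div_le_div_iff₀ (by positivity) (by positivity), one_mul]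
  simpa [mul_comm] using Stirling.le_factorial_stirling n

lemma exp_div_le_poissonProb {μ : ℝ} (hμ : 0 < μ) {n : ℕ} (hn : n ≠ 0) :
    exp (-(μ * poissonRate (n / μ - 1))) / (exp 1 * √n) ≤ poissonProb μ n := by
  rw [poissonProb_eq_exp_mul hμ hn, div_eq_mul_one_div _ (_ * _)]
  refine mul_le_mul_of_nonneg_left ?_ (exp_pos _).le
  rw [div_le_div_iff₀ (by positivity) (by positivity), one_mul]
  linarith [factorial_le_exp_one_mul_sqrt_mul_pow hn]

lemma poissonProb_nonneg {μ : ℝ} (hμ : 0 ≤ μ) (k : ℕ) : 0 ≤ poissonProb μ k := by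
  unfold poissonProb; positivity

lemma summable_poissonProb (μ : ℝ) : Summable (poissonProb μ) :=
  ((summable_pow_div_factorial μ).mul_left (exp (-μ))).congr fun k => by
    rw [poissonProb, mul_div_assoc]

lemma summable_poissonProb_add (μ : ℝ) (n : ℕ) : Summable fun k => poissonProb μ (n + k) :=
  (summable_nat_add_iff n).mpr (summable_poissonProb μ) |>.congr fun k => by rw [Nat.add_comm]

lemma poissonTail_eq_tsum_ceil_add {μ : ℝ} (hμ : 0 ≤ μ) (x : ℝ) :
    poissonTail μ x = ∑' k : ℕ, poissonProb μ (⌈x⌉₊ + k) := by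
  have hs : Summable fun k => if ⌈x⌉₊ ≤ k then poissonProb μ k else 0 :=
    (summable_poissonProb μ).of_nonneg_of_le
      (fun k => by split <;> simp [poissonProb_nonneg hμ])
      (fun k => by split <;> simp [poissonProb_nonneg hμ])
  simp only [poissonTail, ← Nat.ceil_le]
  rw [← hs.sum_add_tsum_nat_add ⌈x⌉₊,
    Finset.sum_eq_zero fun i hi => if_neg (by rw [Finset.mem_range] at hi; omega), zero_add]
  exact tsum_congr fun k => by rw [if_pos (by omega), Nat.add_comm]

lemma poissonProb_add_le_mul_pow {μ : ℝ} (hμ : 0 ≤ μ) (n k : ℕ) :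
    poissonProb μ (n + k) ≤ poissonProb μ n * (μ / (n + 1)) ^ k := by
  have hfac : (n ! : ℝ) * ((n : ℝ) + 1) ^ k ≤ (n + k)! := by
    exact_mod_cast Nat.factorial_mul_pow_le_factorial
  calc poissonProb μ (n + k) ≤ exp (-μ) * μ ^ (n + k) / (n ! * ((n : ℝ) + 1) ^ k) := by
        unfold poissonProb; gcongr
    _ = poissonProb μ n * (μ / (n + 1)) ^ k := by
        rw [poissonProb, div_pow, pow_add]; field_simp

lemma poissonProb_add_le {μ : ℝ} (hμ : 0 ≤ μ) {n : ℕ} (hn : μ ≤ n + 1) (k : ℕ) :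
    poissonProb μ (n + k) ≤ poissonProb μ n :=
  (poissonProb_add_le_mul_pow hμ n k).trans <| mul_le_of_le_one_right (poissonProb_nonneg hμ n)
    (pow_le_one₀ (by positivity) ((div_le_one (by positivity)).mpr hn))

lemma poissonTail_le_div_mul_poissonProb_ceil {μ d : ℝ} (hμ : 0 ≤ μ) (hd : 0 < d) :
    poissonTail μ (μ * (1 + d)) ≤ (1 + d) / d * poissonProb μ ⌈μ * (1 + d)⌉₊ := by
  set m := ⌈μ * (1 + d)⌉₊
  set r := μ / (m + 1)
  have hr0 : 0 ≤ r := by positivity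
  have hr : r ≤ 1 / (1 + d) := by
    rw [div_le_div_iff₀ (by positivity) (by positivity), one_mul]
    linarith [Nat.le_ceil (μ * (1 + d))]
  have hr1 : r < 1 := hr.trans_lt ((div_lt_one (by linarith)).mpr (by linarith))
  calc poissonTail μ (μ * (1 + d)) ≤ ∑' k : ℕ, poissonProb μ m * r ^ k := by
        rw [poissonTail_eq_tsum_ceil_add hμ]
        exact Summable.tsum_le_tsum (poissonProb_add_le_mul_pow hμ m)
          (summable_poissonProb_add μ m) ((summable_geometric_of_lt_one hr0 hr1).mul_left _)
    _ = poissonProb μ m * (1 - r)⁻¹ := by rw [tsum_mul_left, tsum_geometric_of_lt_one hr0 hr1]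
    _ ≤ poissonProb μ m * ((1 + d) / d) := by
        refine mul_le_mul_of_nonneg_left ?_ (poissonProb_nonneg hμ m)
        rw [← inv_div]
        refine inv_anti₀ (by positivity) ?_
        have : 1 / (1 + d) = 1 - d / (1 + d) := by field_simp; ring
        linarith
    _ = (1 + d) / d * poissonProb μ m := mul_comm _ _

lemma nat_mul_poissonProb_le_poissonTail {μ x : ℝ} (hμ : 0 ≤ μ) (hx : μ ≤ x) (N : ℕ) :
    N * poissonProb μ (⌈x⌉₊ + N) ≤ poissonTail μ x := by
  calc (N : ℝ) * poissonProb μ (⌈x⌉₊ + N) = ∑ _k ∈ Finset.range N, poissonProb μ (⌈x⌉₊ + N) := by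
        simp
    _ ≤ ∑ k ∈ Finset.range N, poissonProb μ (⌈x⌉₊ + k) := by
        refine Finset.sum_le_sum fun k hk => ?_
        obtain ⟨j, hj⟩ := Nat.exists_eq_add_of_lt (Finset.mem_range.mp hk)
        rw [hj, show ⌈x⌉₊ + (k + j + 1) = ⌈x⌉₊ + k + (j + 1) by ring]
        refine poissonProb_add_le hμ ?_ _
        push_cast
        linarith [Nat.le_ceil x, (Nat.cast_nonneg k : (0 : ℝ) ≤ k)]
    _ ≤ poissonTail μ x := by
        rw [poissonTail_eq_tsum_ceil_add hμ]
        exact (summable_poissonProb_add μ _).sum_le_tsum _ fun k _ => poissonProb_nonneg hμ _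

theorem poissonTail_le_of_moderate {l d : ℝ} (hd : 0 < d) (hld2 : 1 ≤ l * d ^ 2)
    (hld3 : l * d ^ 3 ≤ 1 / 100) :
    poissonTail l (l * (1 + d)) ≤ exp (-(l * d ^ 2 / 2)) / (d * √l) := by
  have hl : 0 < l := pos_of_mul_pos_left (one_pos.trans_le hld2) (by positivity)
  have hd1 : d ≤ 1 / 100 := by nlinarith
  have hld : 1 ≤ l * d := by nlinarith
  set m := ⌈l * (1 + d)⌉₊
  have hm : l * (1 + d) ≤ m := Nat.le_ceil _
  have hm1 : (m : ℝ) < l * (1 + d) + 1 := Nat.ceil_lt_add_one (by positivity)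
  have hm0 : m ≠ 0 :=
    (Nat.cast_pos (α := ℝ).mp ((by positivity : (0 : ℝ) < l * (1 + d)).trans_le hm)).ne'
  set t := m / l - 1
  have htd : d ≤ t := by rw [le_sub_iff_add_le, le_div_iff₀ hl]; linarith
  have ht2d : t ≤ 2 * d := by rw [sub_le_iff_le_add, div_le_iff₀ hl]; linarith
  have hrate := sub_le_mul_poissonRate hl.le hd.le htd ht2d (by linarith)
  have hconst : exp (8 / 25) * (1 + d) ≤ √(2 * π) := by
    have he : exp (8 / 25) ≤ 25 / 17 := by
      have := exp_bound_div_one_sub_of_interval (x := 8 / 25) (by norm_num) (by norm_num)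
      norm_num at this ⊢; exact this
    have hs : (5 / 2 : ℝ) ≤ √(2 * π) :=
      le_sqrt_of_sq_le (by nlinarith [pi_gt_d2])
    nlinarith [exp_pos (8 / 25)]
  calc poissonTail l (l * (1 + d)) ≤ (1 + d) / d * poissonProb l m :=
        poissonTail_le_div_mul_poissonProb_ceil hl.le hd
    _ ≤ (1 + d) / d * (exp (-(l * poissonRate t)) / √(2 * π * m)) := by
        gcongr; exact poissonProb_le_exp_div hl hm0
    _ ≤ (1 + d) / d * (exp (-(l * d ^ 2 / 2)) * exp (8 / 25) / √(2 * π * l)) := by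
        rw [← exp_add]
        gcongr
        · linarith
        · nlinarith
    _ = exp (-(l * d ^ 2 / 2)) / (d * √l) * (exp (8 / 25) * (1 + d) / √(2 * π)) := by
        rw [sqrt_mul (by positivity)]; field_simp
    _ ≤ exp (-(l * d ^ 2 / 2)) / (d * √l) := by
        refine mul_le_of_le_one_right (by positivity) ?_
        rwa [div_le_one (by positivity)]

theorem le_poissonTail_of_moderate {l d : ℝ} (hd : 0 < d) (hld2 : 1 ≤ l * d ^ 2)
    (hld3 : l * d ^ 3 ≤ 1 / 100) :
    exp (-13) * exp (-(l * d ^ 2 / 2)) / (d * √l) ≤ poissonTail l (l * (1 + d)) := by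
  have hl : 0 < l := pos_of_mul_pos_left (one_pos.trans_le hld2) (by positivity)
  have hd1 : d ≤ 1 / 100 := by nlinarith
  have hinvd : 1 / d ≤ l * d := by rw [div_le_iff₀ hd]; nlinarith
  set N := ⌈1 / d⌉₊
  have hN : 1 / d ≤ N := Nat.le_ceil _
  have hN1 : (N : ℝ) < 1 / d + 1 := Nat.ceil_lt_add_one (by positivity)
  set n := ⌈l * (1 + d)⌉₊ + N
  have hn : l * (1 + d) ≤ n := by
    push_cast [n]; linarith [Nat.le_ceil (l * (1 + d)), (N.cast_nonneg : (0 : ℝ) ≤ N)]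
  have hn1 : (n : ℝ) < l * (1 + d) + 3 / d := by
    have : 2 ≤ 2 / d := by rw [le_div_iff₀ hd]; linarith
    push_cast [n]
    linarith [Nat.ceil_lt_add_one (by positivity : 0 ≤ l * (1 + d)),
      show 3 / d = 1 / d + 2 / d by ring]
  have hn0 : n ≠ 0 :=
    (Nat.cast_pos (α := ℝ).mp ((by positivity : (0 : ℝ) < l * (1 + d)).trans_le hn)).ne'
  set t := n / l - 1
  have htd : d ≤ t := by rw [le_sub_iff_add_le, le_div_iff₀ hl]; linarith
  have hlt : l * d * (t - d) ≤ 3 := by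
    have : l * (t - d) = n - l * (1 + d) := by simp only [t]; field_simp; ring
    rw [mul_right_comm, this]
    exact ((lt_div_iff₀ hd).mp (by linarith)).le
  have hrate := mul_poissonRate_le_add hl.le hd hld2 htd hlt (by nlinarith)
  have hsqrt : √n ≤ 2 * √l := by
    rw [show 2 * √l = √(4 * l) by rw [sqrt_mul' _ hl.le, show (4 : ℝ) = 2 ^ 2 by norm_num,
      sqrt_sq zero_le_two]]
    have : l * d ≤ l / 100 := by nlinarith
    exact sqrt_le_sqrt (by linarith [show 3 / d = 3 * (1 / d) by ring])
  have htwo : exp 1 * 2 ≤ exp 2 := by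
    rw [show (2 : ℝ) = 1 + 1 by norm_num, exp_add]; gcongr; linarith [add_one_le_exp 1]
  calc exp (-13) * exp (-(l * d ^ 2 / 2)) / (d * √l)
      = 1 / d * (exp (-(l * d ^ 2 / 2)) * exp (-11) / (exp 2 * √l)) := by
        rw [show (-13 : ℝ) = -11 - 2 by norm_num, exp_sub]; field_simp
    _ ≤ N * (exp (-(l * poissonRate t)) / (exp 1 * √n)) := by
        rw [← exp_add]
        gcongr ?_ * (exp ?_ / ?_)
        · linarith
        · calc exp 1 * √n ≤ exp 1 * (2 * √l) := by gcongr
            _ ≤ exp 2 * √l := by nlinarith [sqrt_nonneg l]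
    _ ≤ N * poissonProb l n := by gcongr; exact exp_div_le_poissonProb hl hn0
    _ ≤ poissonTail l (l * (1 + d)) :=
        nat_mul_poissonProb_le_poissonTail hl.le (by nlinarith) N

/-- Gaussian-type two-sided bounds on the Poisson tail in the moderate deviation regime:
if `δ = δ(λ) ≥ 1/√λ` and `λδ³ → 0` as `λ → ∞`, then there is a universal constant `c > 0`
(the constant from the sharp Poisson tail lower bound) such that
`(1−o(1))·c·e^{−λδ²/2}/(δ√λ) ≤ P(X ≥ λ(1+δ)) ≤ (1+o(1))·e^{−λδ²/2}/(δ√λ)`. -/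
theorem poisson_tail_moderate_deviation (δ : ℝ → ℝ)
    (hδ : ∀ᶠ lam in atTop, 1 / Real.sqrt lam ≤ δ lam)
    (hδ3 : Tendsto (fun lam => lam * (δ lam) ^ 3) atTop (nhds 0)) :
    ∃ c : ℝ, 0 < c ∧ ∃ e : ℝ → ℝ, Tendsto e atTop (nhds 0) ∧
      ∀ᶠ lam in atTop,
        (1 - e lam) * c * Real.exp (-(lam * (δ lam) ^ 2 / 2)) / (δ lam * Real.sqrt lam) ≤
          poissonTail lam (lam * (1 + δ lam)) ∧
        poissonTail lam (lam * (1 + δ lam)) ≤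
          (1 + e lam) * Real.exp (-(lam * (δ lam) ^ 2 / 2)) / (δ lam * Real.sqrt lam) := by
  refine ⟨exp (-13), exp_pos _, 0, tendsto_const_nhds, ?_⟩
  filter_upwards [hδ, hδ3.eventually (eventually_le_nhds (by norm_num : (0 : ℝ) < 1 / 100)),
    eventually_gt_atTop 0] with l hδl hδ3l hl
  have hd : 0 < δ l := (by positivity : 0 < 1 / √l).trans_le hδl
  have hld2 : 1 ≤ l * δ l ^ 2 := by
    have h : 1 ≤ δ l * √l := (div_le_iff₀ (sqrt_pos.mpr hl)).mp hδl
    nlinarith [sq_sqrt hl.le]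
  simp only [Pi.zero_apply, sub_zero, add_zero, one_mul]
  exact ⟨le_poissonTail_of_moderate hd hld2 hδ3l, poissonTail_le_of_moderate hd hld2 hδ3l⟩
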